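/- Let λ, γ, C₁ > 0 and 0 < C_φ < R < 2 C_φ. Define C₂ = ( (R − C_φ) / (C₁ R^{1+γ/2}) )^{2/γ} and C̄ = C₂ (2 C_φ − R) > 0. Let 0 < ε < C₂ and let φ : [0,∞) → [0,∞) be continuous with φ(0) = C_φ ε, and suppose that for every t ≥ 0 with the property that φ(s) ≤ ε R e^{λ s} for all s ∈ [0,t], one has |φ(t) − C_φ ε e^{λ t}| ≤ C₁ (ε R e^{λ t})^{1+γ/2}. Then, setting T_ε = (1/λ) log(C₂/ε) > 0, one has φ(s) ≤ ε R e^{λ s} for all s ∈ [0, T_ε] and φ(T_ε) ≥ C̄. -/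

import Mathlib

open Real Set Filter Topology

/-!
Continuous induction on `[0, T_ε]`: as long as `φ(s) ≤ εR e^{λs}` holds up to time `t`, the
Duhamel bound and `ε e^{λt} < C₂` give the strictly better `φ(t) < εR e^{λt}`, because `C₂` is
exactly the size at which the nonlinear error `C₁ (uR)^{1+γ/2}` catches up with the margin
`(R − C_φ) u`. At `T_ε` the linear part has reached `C_φ C₂` and the error is at most
`(R − C_φ) C₂`, which leaves `C₂ (2C_φ − R)`.
-/

theorem le_on_Icc_of_bootstrap {α β : Type*} [ConditionallyCompleteLinearOrder α]
    [TopologicalSpace α] [OrderTopology α] [DenselyOrdered α]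
    [LinearOrder β] [TopologicalSpace β] [OrderClosedTopology β]
    {a b : α} {f g : α → β} (hf : ContinuousOn f (Icc a b)) (hg : ContinuousOn g (Icc a b))
    (ha : f a ≤ g a) (himprove : ∀ t ∈ Ico a b, (∀ s ∈ Icc a t, f s ≤ g s) → f t < g t) :
    ∀ s ∈ Icc a b, f s ≤ g s := by
  have hclosed : IsClosed ({x | f x ≤ g x} ∩ Icc a b) := by
    rw [inter_comm]
    exact isClosed_Icc.isClosed_le hf hg
  refine fun s hs ↦ hclosed.Icc_subset_of_forall_mem_nhdsGT_of_Icc_subset ha ?_ hs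
  intro t ht hbelow
  have hIoc : Ioc t b ⊆ Icc a b := Ioc_subset_Icc_self.trans (Icc_subset_Icc_left ht.1)
  have hnhds : 𝓝[Ioc t b] t = 𝓝[>] t := nhdsWithin_Ioc_eq_nhdsGT ht.2
  have hft := ((hf t (Ico_subset_Icc_self ht)).mono hIoc).tendsto
  have hgt := ((hg t (Ico_subset_Icc_self ht)).mono hIoc).tendsto
  rw [hnhds] at hft hgt
  filter_upwards [hft.eventually_lt hgt (himprove t ht hbelow)] with x hx using hx.le

theorem mul_mul_rpow_one_add_le {C R M p u : ℝ} (hC : 0 < C) (hR : 0 < R) (hM : 0 ≤ M)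
    (hp : 0 < p) (hu : 0 ≤ u) (hle : u ≤ (M / (C * R ^ (1 + p))) ^ p⁻¹) :
    C * (u * R) ^ (1 + p) ≤ M * u := by
  have hc : 0 < C * R ^ (1 + p) := by positivity
  have hup : u ^ p ≤ M / (C * R ^ (1 + p)) :=
    (le_rpow_inv_iff_of_pos hu (div_nonneg hM hc.le) hp).1 hle
  calc C * (u * R) ^ (1 + p) = C * R ^ (1 + p) * u ^ p * u := by
        rw [mul_rpow hu hR.le, rpow_add' hu (by positivity), rpow_one]; ring
    _ ≤ C * R ^ (1 + p) * (M / (C * R ^ (1 + p))) * u := by gcongr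
    _ = M * u := by field_simp

theorem mul_mul_rpow_one_add_lt {C R M p u : ℝ} (hC : 0 < C) (hR : 0 < R) (hM : 0 ≤ M)
    (hp : 0 < p) (hu : 0 < u) (hlt : u < (M / (C * R ^ (1 + p))) ^ p⁻¹) :
    C * (u * R) ^ (1 + p) < M * u := by
  have hc : 0 < C * R ^ (1 + p) := by positivity
  have hup : u ^ p < M / (C * R ^ (1 + p)) :=
    (lt_rpow_inv_iff_of_pos hu.le (div_nonneg hM hc.le) hp).1 hlt
  calc C * (u * R) ^ (1 + p) = C * R ^ (1 + p) * u ^ p * u := by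
        rw [mul_rpow hu.le hR.le, rpow_add' hu.le (by positivity), rpow_one]; ring
    _ < C * R ^ (1 + p) * (M / (C * R ^ (1 + p))) * u := by gcongr
    _ = M * u := by field_simp

theorem mul_exp_mul_one_div_mul_log_div {lam ε C : ℝ} (hlam : lam ≠ 0) (hε : 0 < ε)
    (hC : 0 < C) : ε * exp (lam * (1 / lam * log (C / ε))) = C := by
  rw [← mul_assoc, mul_one_div_cancel hlam, one_mul, exp_log (div_pos hC hε)]
  field_simp

theorem bootstrap_instability (lam gam C₁ Cphi R : ℝ)
    (hlam : 0 < lam) (hgam : 0 < gam) (hC₁ : 0 < C₁)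
    (hCphi : 0 < Cphi) (hR₁ : Cphi < R) (hR₂ : R < 2 * Cphi)
    (C₂ : ℝ) (hC₂ : C₂ = ((R - Cphi) / (C₁ * R ^ (1 + gam/2))) ^ (2/gam))
    (Cbar : ℝ) (hCbar : Cbar = C₂ * (2 * Cphi - R))
    (ε : ℝ) (hε : 0 < ε) (hεC₂ : ε < C₂)
    (φ : ℝ → ℝ) (hφcont : ContinuousOn φ (Set.Ici 0))
    (hφ0 : φ 0 = Cphi * ε)
    (hduhamel : ∀ t : ℝ, 0 ≤ t →
      (∀ s ∈ Set.Icc (0:ℝ) t, φ s ≤ ε * R * Real.exp (lam * s)) →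
      |φ t - Cphi * ε * Real.exp (lam * t)| ≤ C₁ * (ε * R * Real.exp (lam * t)) ^ (1 + gam/2))
    (Tε : ℝ) (hTε : Tε = (1/lam) * Real.log (C₂ / ε)) :
    0 < Tε ∧ 0 < Cbar ∧
      (∀ s ∈ Set.Icc (0:ℝ) Tε, φ s ≤ ε * R * Real.exp (lam * s)) ∧
      Cbar ≤ φ Tε := by
  have hR : 0 < R := hCphi.trans hR₁
  have hC₂pos : 0 < C₂ := hε.trans hεC₂
  have hC₂' : C₂ = ((R - Cphi) / (C₁ * R ^ (1 + gam/2))) ^ (gam/2)⁻¹ := by rw [hC₂, inv_div]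
  have hTεpos : 0 < Tε :=
    hTε ▸ mul_pos (one_div_pos.2 hlam) (log_pos ((one_lt_div hε).2 hεC₂))
  have hsizeTε : ε * exp (lam * Tε) = C₂ := hTε ▸ mul_exp_mul_one_div_mul_log_div hlam.ne' hε hC₂pos
  have hbound : ∀ s ∈ Icc (0:ℝ) Tε, φ s ≤ ε * R * exp (lam * s) := by
    refine le_on_Icc_of_bootstrap (hφcont.mono Icc_subset_Ici_self) (by fun_prop)
      (by rw [hφ0, mul_zero, exp_zero]; nlinarith) fun t ht hbelow ↦ ?_
    have hsize : ε * exp (lam * t) < C₂ := hsizeTε ▸ by gcongr; exact ht.2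
    have herr := mul_mul_rpow_one_add_lt hC₁ hR (sub_nonneg.2 hR₁.le) (half_pos hgam)
      (by positivity) (hC₂' ▸ hsize)
    have hd := (abs_sub_le_iff.1 (hduhamel t ht.1 hbelow)).1
    rw [mul_right_comm ε R] at hd ⊢
    linarith
  have herr := mul_mul_rpow_one_add_le hC₁ hR (sub_nonneg.2 hR₁.le) (half_pos hgam)
    hC₂pos.le hC₂'.le
  have hd := (abs_sub_le_iff.1 (hduhamel Tε hTεpos.le hbound)).2
  rw [mul_right_comm ε R, mul_assoc Cphi, hsizeTε] at hd
  refine ⟨hTεpos, hCbar ▸ mul_pos hC₂pos (by linarith), hbound, ?_⟩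
  linarith
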